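/- For the Hantzsche–Wendt group Γ ≤ Isom(ℝ³) generated by the glide rotations α: (x,y,z) ↦ (x + a/2, −y, −z) and β: (x,y,z) ↦ (−x, y + b/2, −z) (a, b, c > 0, with α, β chosen so that the translation lattice is ℤ(a,0,0)+ℤ(0,b,0)+ℤ(0,0,c)), every translation t_v with 2v ∈ Λ and v ∉ Λ has the property that the group generated by Γ and t_v contains a nontrivial element with a fixed point in ℝ³. -/

import Mathlib

noncomputable section

/-- Euclidean space `E^n`. -/
abbrev E (n : ℕ) : Type := EuclideanSpace ℝ (Fin n)

/-- Discreteness of a group of isometries, expressed as proper discontinuity of its action. -/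
def IsDiscreteGrp {n : ℕ} (Γ : Subgroup (E n ≃ᵢ E n)) : Prop :=
  ∀ K : Set (E n), IsCompact K →
    {γ : E n ≃ᵢ E n | γ ∈ Γ ∧ ((γ '' K) ∩ K).Nonempty}.Finite

/-- Cocompactness of a group of isometries of `E^n`. -/
def IsCocompactGrp {n : ℕ} (Γ : Subgroup (E n ≃ᵢ E n)) : Prop :=
  ∃ K : Set (E n), IsCompact K ∧ ∀ x : E n, ∃ γ ∈ Γ, γ x ∈ K

/-- The action of `Γ` on `E^n` is free. -/
def ActsFreely {n : ℕ} (Γ : Subgroup (E n ≃ᵢ E n)) : Prop :=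
  ∀ γ ∈ Γ, (∃ x : E n, γ x = x) → γ = 1

/-- A crystallographic group: discrete and cocompact. -/
def IsCrystallographic {n : ℕ} (Γ : Subgroup (E n ≃ᵢ E n)) : Prop :=
  IsDiscreteGrp Γ ∧ IsCocompactGrp Γ

/-- A Bieberbach group: discrete, cocompact, acting freely. -/
def IsBieberbach {n : ℕ} (Γ : Subgroup (E n ≃ᵢ E n)) : Prop :=
  IsDiscreteGrp Γ ∧ IsCocompactGrp Γ ∧ ActsFreely Γ

/-- `f` is a translation. -/
def IsTranslation {n : ℕ} (f : E n ≃ᵢ E n) : Prop :=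
  ∃ a : E n, ∀ x : E n, f x = x + a

/-!
Every element of `Γ = ⟨α, β⟩` has the form
`x ↦ ((-1)ⁿ x₀ + m a/2, (-1)ᵐ x₁ + n b/2, (-1)ᵐ⁺ⁿ x₂ + k c/2)` with `k ≡ n (mod 2)`, and
conversely every such map lies in `Γ`: the lattice translations `α²`, `β²`, `(βα)²` shift
`(m, n, k)` by `2` in one coordinate, and `1, α, β, αβ` realise the four residue classes.
A translation in `Γ` therefore has `m, n, k` even, so `2v ∈ Λ` forces
`v = (p a/2, q b/2, r c/2)`, and `v ∉ Λ` means that one of `p, q, r` is odd. Composing `τ` with an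
element of `Γ` whose linear part is a half-turn about the axis of that coordinate, with the
translation along the axis cancelled, gives a half-turn in `⟨Γ, τ⟩`, which fixes a line.
-/

lemma Subgroup.exists_mem_coe_eq_comp_iff {X : Type*} [PseudoEMetricSpace X]
    {S : Subgroup (X ≃ᵢ X)} {t : X ≃ᵢ X} (ht : t ∈ S) (F : X → X) :
    (∃ g ∈ S, ⇑g = t ∘ F) ↔ ∃ g ∈ S, ⇑g = F := by
  constructor
  · rintro ⟨g, hg, hgF⟩
    refine ⟨t⁻¹ * g, mul_mem (inv_mem ht) hg, ?_⟩
    rw [IsometryEquiv.coe_mul, hgF]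
    ext1 x
    simp
  · rintro ⟨g, hg, rfl⟩
    exact ⟨t * g, mul_mem ht hg, rfl⟩

lemma Function.Periodic.eq_of_even_sub {α : Type*} {f : ℤ → α} (hf : f.Periodic 2) {m n : ℤ}
    (h : Even (m - n)) : f m = f n := by
  obtain ⟨j, hj⟩ := h
  rw [show m = n + j * 2 by omega]
  exact hf.int_mul j n

lemma Int.negOnePow_units_mul (u : ℤˣ) (n : ℤ) : (u * n).negOnePow = n.negOnePow := by
  rcases Int.units_eq_one_or u with rfl | rfl <;> simp [Int.negOnePow_neg]

namespace HantzscheWendt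

variable (a b c : ℝ)

def map (m n k : ℤ) (x : E 3) : E 3 :=
  !₂[(n.negOnePow : ℤ) * x 0 + m * (a / 2), (m.negOnePow : ℤ) * x 1 + n * (b / 2),
    ((m + n).negOnePow : ℤ) * x 2 + k * (c / 2)]

def shift (p q r : ℤ) : E 3 := !₂[p * (a / 2), q * (b / 2), r * (c / 2)]

lemma map_zero : map a b c 0 0 0 = id := by
  funext x
  ext i
  fin_cases i <;> simp [map]

lemma map_comp (m n k m' n' k' : ℤ) :
    map a b c m n k ∘ map a b c m' n' k' =
      map a b c (m + n.negOnePow * m') (n + m.negOnePow * n') (k + (m + n).negOnePow * k') := by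
  funext x
  ext i
  fin_cases i <;>
    simp only [map, Function.comp_apply, Fin.zero_eta, Fin.mk_one, Fin.reduceFinMk, Fin.isValue,
      PiLp.toLp_apply, Matrix.cons_val_zero, Matrix.cons_val_one, Matrix.cons_val_two,
      Matrix.head_cons, Matrix.tail_cons, Int.negOnePow_add, Int.negOnePow_units_mul,
      Units.val_mul, Int.cast_mul, Int.cast_add]
  all_goals ring

lemma map_even_comp {p q : ℤ} (hp : Even p) (hq : Even q) (r m n k : ℤ) :
    map a b c p q r ∘ map a b c m n k = map a b c (p + m) (q + n) (r + k) := by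
  simp [map_comp, Int.negOnePow_even _ hp, Int.negOnePow_even _ hq,
    Int.negOnePow_even _ (hp.add hq)]

lemma map_apply_of_even {m n : ℤ} (hm : Even m) (hn : Even n) (k : ℤ) (x : E 3) :
    map a b c m n k x = x + shift a b c m n k := by
  ext i
  fin_cases i <;>
    simp [map, shift, Int.negOnePow_even _ hm, Int.negOnePow_even _ hn,
      Int.negOnePow_even _ (hm.add hn)]

lemma map_comp_map_inv (m n k : ℤ) :
    map a b c m n k ∘
      map a b c (-(n.negOnePow * m)) (-(m.negOnePow * n)) (-((m + n).negOnePow * k)) = id := by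
  rw [map_comp, ← map_zero a b c]
  congr 1 <;> rw [mul_neg, ← mul_assoc, ← Units.val_mul, Int.units_mul_self] <;> simp

def subgroup : Subgroup (E 3 ≃ᵢ E 3) where
  carrier := {g | ∃ m n k : ℤ, Even (k - n) ∧ ⇑g = map a b c m n k}
  mul_mem' := by
    rintro g h ⟨m, n, k, hkn, hg⟩ ⟨m', n', k', hkn', hh⟩
    refine ⟨_, _, _, ?_, by rw [IsometryEquiv.coe_mul, hg, hh, map_comp]⟩
    rw [← Int.negOnePow_eq_iff] at *
    simp only [Int.negOnePow_add, Int.negOnePow_units_mul, hkn, hkn']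
  one_mem' := ⟨0, 0, 0, by simp, (map_zero a b c).symm⟩
  inv_mem' := by
    rintro g ⟨m, n, k, hkn, hg⟩
    refine ⟨-(n.negOnePow * m), -(m.negOnePow * n), -((m + n).negOnePow * k), ?_, ?_⟩
    · rw [← Int.negOnePow_eq_iff] at *
      simp only [Int.negOnePow_neg, Int.negOnePow_units_mul, hkn]
    · calc ⇑g⁻¹ = ⇑g⁻¹ ∘ (⇑g ∘ _) := by rw [hg, map_comp_map_inv]; rfl
        _ = _ := by ext1 x; simp

lemma coe_eq_map_one_zero_zero {α : E 3 ≃ᵢ E 3}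
    (hα : ∀ x : E 3, α x = ![x 0 + a / 2, -(x 1), -(x 2)]) :
    ⇑α = map a b c 1 0 0 := by
  funext x
  ext i
  fin_cases i <;> simp [map, hα]

lemma coe_eq_map_zero_one_one {β : E 3 ≃ᵢ E 3}
    (hβ : ∀ x : E 3, β x = ![-(x 0), x 1 + b / 2, c / 2 - x 2]) :
    ⇑β = map a b c 0 1 1 := by
  funext x
  ext i
  fin_cases i <;> simp [map, hβ]
  ring

lemma exists_fixed_point_map_add_shift {p q r : ℤ} (h : ¬(Even p ∧ Even q ∧ Even r)) :
    ∃ m n k : ℤ, Even (k - n) ∧ ¬(Even m ∧ Even n) ∧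
      ∃ x, map a b c m n k (x + shift a b c p q r) = x := by
  by_cases hp : Odd p
  · refine ⟨-p, 0, 0, by simp, fun h ↦ Int.not_even_iff_odd.mpr hp (even_neg.mp h.1),
      !₂[0, -(q * (b / 2)) / 2, -(r * (c / 2)) / 2], ?_⟩
    ext i
    fin_cases i <;> simp [map, shift, Int.negOnePow_neg, Int.negOnePow_odd _ hp] <;> ring
  by_cases hq : Odd q
  · refine ⟨0, -q, -q, by simp, fun h ↦ Int.not_even_iff_odd.mpr hq (even_neg.mp h.2),
      !₂[-(p * (a / 2)) / 2, 0, -((r + q) * (c / 2)) / 2], ?_⟩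
    ext i
    fin_cases i <;> simp [map, shift, Int.negOnePow_neg, Int.negOnePow_odd _ hq] <;> ring
  obtain ⟨t, rfl⟩ : Odd r := by
    simp only [Int.not_odd_iff_even] at hp hq
    exact Int.not_even_iff_odd.mp fun hr ↦ h ⟨hp, hq, hr⟩
  refine ⟨1, 1, -(2 * t + 1), ⟨-t - 1, by ring⟩, fun h ↦ Int.not_even_one h.1,
    !₂[(1 - p) * (a / 2) / 2, (1 - q) * (b / 2) / 2, 0], ?_⟩
  ext i
  fin_cases i <;> simp [map, shift] <;> ring

variable {a b c} {α β : E 3 ≃ᵢ E 3}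

lemma closure_le_subgroup (hα : ⇑α = map a b c 1 0 0) (hβ : ⇑β = map a b c 0 1 1) :
    Subgroup.closure {α, β} ≤ subgroup a b c := by
  rw [Subgroup.closure_le, Set.insert_subset_iff, Set.singleton_subset_iff]
  exact ⟨⟨1, 0, 0, by decide, hα⟩, ⟨0, 1, 1, by decide, hβ⟩⟩

lemma periodic_exists_mem_closure (hα : ⇑α = map a b c 1 0 0) (hβ : ⇑β = map a b c 0 1 1) :
    (∀ n k, (fun m ↦ ∃ g ∈ Subgroup.closure {α, β}, ⇑g = map a b c m n k).Periodic 2) ∧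
    (∀ m k, (fun n ↦ ∃ g ∈ Subgroup.closure {α, β}, ⇑g = map a b c m n k).Periodic 2) ∧
    (∀ m n, (fun k ↦ ∃ g ∈ Subgroup.closure {α, β}, ⇑g = map a b c m n k).Periodic 2) := by
  have hαS : α ∈ Subgroup.closure {α, β} := Subgroup.subset_closure (Set.mem_insert _ _)
  have hβS : β ∈ Subgroup.closure {α, β} := Subgroup.subset_closure (Set.mem_insert_of_mem _ rfl)
  have hα2 : ⇑(α ^ 2) = map a b c 2 0 0 := by
    rw [pow_two, IsometryEquiv.coe_mul, hα, map_comp]; norm_num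
  have hβ2 : ⇑(β ^ 2) = map a b c 0 2 0 := by
    rw [pow_two, IsometryEquiv.coe_mul, hβ, map_comp]; norm_num
  have hβα2 : ⇑((β * α) ^ 2) = map a b c 0 0 2 := by
    simp only [pow_two, IsometryEquiv.coe_mul, hα, hβ, map_comp]; norm_num
  refine ⟨fun n k m ↦ ?_, fun m k n ↦ ?_, fun m n k ↦ ?_⟩ <;> dsimp only
  · rw [show map a b c (m + 2) n k = ⇑(α ^ 2) ∘ map a b c m n k by
      rw [hα2, map_even_comp a b c even_two .zero]; simp [add_comm],
      Subgroup.exists_mem_coe_eq_comp_iff (pow_mem hαS 2)]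
  · rw [show map a b c m (n + 2) k = ⇑(β ^ 2) ∘ map a b c m n k by
      rw [hβ2, map_even_comp a b c .zero even_two]; simp [add_comm],
      Subgroup.exists_mem_coe_eq_comp_iff (pow_mem hβS 2)]
  · rw [show map a b c m n (k + 2) = ⇑((β * α) ^ 2) ∘ map a b c m n k by
      rw [hβα2, map_even_comp a b c .zero .zero]; simp [add_comm],
      Subgroup.exists_mem_coe_eq_comp_iff (pow_mem (mul_mem hβS hαS) 2)]

lemma exists_mem_closure_coe_eq_map (hα : ⇑α = map a b c 1 0 0) (hβ : ⇑β = map a b c 0 1 1)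
    (m : ℤ) {n k : ℤ} (hkn : Even (k - n)) :
    ∃ g ∈ Subgroup.closure {α, β}, ⇑g = map a b c m n k := by
  have hαS : α ∈ Subgroup.closure {α, β} := Subgroup.subset_closure (Set.mem_insert _ _)
  have hβS : β ∈ Subgroup.closure {α, β} := Subgroup.subset_closure (Set.mem_insert_of_mem _ rfl)
  suffices ∃ m₀ n₀ : ℤ, Even (m - m₀) ∧ Even (n - n₀) ∧
      ∃ g ∈ Subgroup.closure {α, β}, ⇑g = map a b c m₀ n₀ n₀ by
    obtain ⟨m₀, n₀, hm₀, hn₀, h⟩ := this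
    obtain ⟨hm, hn, hk⟩ := periodic_exists_mem_closure hα hβ
    have e₁ := (hm n k).eq_of_even_sub hm₀
    have e₂ := (hn m₀ k).eq_of_even_sub hn₀
    have e₃ := (hk m₀ n₀).eq_of_even_sub (sub_add_sub_cancel k n n₀ ▸ hkn.add hn₀)
    rwa [e₁, e₂, e₃]
  rcases Int.even_or_odd m with hm | hm <;> rcases Int.even_or_odd n with hn | hn
  · exact ⟨0, 0, by simpa, by simpa, 1, one_mem _, (map_zero a b c).symm⟩
  · exact ⟨0, 1, by simpa, hn.sub_odd odd_one, β, hβS, hβ⟩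
  · exact ⟨1, 0, hm.sub_odd odd_one, by simpa, α, hαS, hα⟩
  · refine ⟨1, -1, hm.sub_odd odd_one, hn.sub_odd (by decide), α * β, mul_mem hαS hβS, ?_⟩
    rw [IsometryEquiv.coe_mul, hα, hβ, map_comp]
    norm_num

lemma closure_eq_subgroup (hα : ⇑α = map a b c 1 0 0) (hβ : ⇑β = map a b c 0 1 1) :
    Subgroup.closure {α, β} = subgroup a b c := by
  refine le_antisymm (closure_le_subgroup hα hβ) fun g ⟨m, n, k, hkn, hg⟩ ↦ ?_
  obtain ⟨g', hg', hg'_eq⟩ := exists_mem_closure_coe_eq_map hα hβ m hkn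
  rwa [DFunLike.coe_injective (hg.trans hg'_eq.symm)]

lemma even_of_map_eq_add {m n k : ℤ} {w : E 3} (h : ∀ x, map a b c m n k x = x + w) :
    Even m ∧ Even n := by
  have h₀ := h 0
  have h₁ := h !₂[1, 1, 1]
  have e₀ : ((n.negOnePow : ℤ) : ℝ) = 1 := by
    have := congrArg (· 0) h₀; have := congrArg (· 0) h₁; simp [map] at *; linarith
  have e₁ : ((m.negOnePow : ℤ) : ℝ) = 1 := by
    have := congrArg (· 1) h₀; have := congrArg (· 1) h₁; simp [map] at *; linarith
  simp only [Int.cast_eq_one, Units.val_eq_one, Int.negOnePow_eq_one_iff] at e₀ e₁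
  exact ⟨e₁, e₀⟩

lemma exists_eq_shift_of_two_smul {g : E 3 ≃ᵢ E 3} {v : E 3} (hg : g ∈ subgroup a b c)
    (h : ∀ x, g x = x + (2 : ℝ) • v) : ∃ p q r : ℤ, v = shift a b c p q r := by
  obtain ⟨m, n, k, hkn, hg⟩ := hg
  obtain ⟨⟨p, rfl⟩, ⟨q, rfl⟩⟩ := even_of_map_eq_add fun x ↦ hg ▸ h x
  obtain ⟨r, rfl⟩ : Even k := (Int.even_sub.mp hkn).mpr ⟨q, rfl⟩
  refine ⟨p, q, r, ?_⟩
  have h₀ := h 0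
  rw [hg, map_apply_of_even a b c ⟨p, rfl⟩ ⟨q, rfl⟩] at h₀
  ext i
  have := congrArg (· i) (add_left_cancel h₀)
  fin_cases i <;> simp [shift] at this ⊢ <;> linarith

end HantzscheWendt

open HantzscheWendt

theorem HW3_no_admissible_translation_general (a b c : ℝ)
    (α β : E 3 ≃ᵢ E 3)
    (hα : ∀ x : E 3, α x = ![x 0 + a / 2, -(x 1), -(x 2)])
    (hβ : ∀ x : E 3, β x = ![-(x 0), x 1 + b / 2, c / 2 - x 2])
    (v : E 3) (τ : E 3 ≃ᵢ E 3) (hτ : ∀ x : E 3, τ x = x + v)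
    (h2v : ∃ s ∈ Subgroup.closure {α, β}, ∀ x : E 3, s x = x + (2 : ℝ) • v)
    (hv : τ ∉ Subgroup.closure {α, β}) :
    ∃ γ ∈ Subgroup.closure ((Subgroup.closure {α, β} : Subgroup (E 3 ≃ᵢ E 3)) ∪ {τ} :
        Set (E 3 ≃ᵢ E 3)),
      γ ≠ 1 ∧ ∃ x : E 3, γ x = x := by
  have hα' := coe_eq_map_one_zero_zero a b c hα
  have hβ' := coe_eq_map_zero_one_one a b c hβ
  have hΓ := closure_eq_subgroup hα' hβ'
  obtain ⟨s, hs, hs2v⟩ := h2v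
  obtain ⟨p, q, r, rfl⟩ := exists_eq_shift_of_two_smul (hΓ ▸ hs) hs2v
  have hpqr : ¬(Even p ∧ Even q ∧ Even r) := fun ⟨hp, hq, hr⟩ ↦ hv <| hΓ ▸
    ⟨p, q, r, Int.even_sub.mpr (iff_of_true hr hq), funext fun x ↦
      (hτ x).trans (map_apply_of_even a b c hp hq r x).symm⟩
  obtain ⟨m, n, k, hkn, hmn, x, hx⟩ := exists_fixed_point_map_add_shift a b c hpqr
  obtain ⟨g, hg, hg_eq⟩ := exists_mem_closure_coe_eq_map hα' hβ' m hkn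
  have hne : g * τ ≠ 1 := by
    intro h1
    have hgτ : ∀ y, map a b c m n k y = y + -shift a b c p q r := fun y ↦ by
      simpa [hg_eq, hτ, sub_eq_add_neg] using congrArg (· (y - shift a b c p q r)) h1
    exact hmn (even_of_map_eq_add hgτ)
  exact ⟨g * τ,
    mul_mem (Subgroup.subset_closure (Or.inl hg)) (Subgroup.subset_closure (Or.inr rfl)),
    hne, x, by simp [hg_eq, hτ, hx]⟩

/-- for the Hantzsche–Wendt group `Γ` (fundamental group of `C₂,₂`),
generated by `α : (x,y,z) ↦ (x + a/2, -y, -z)` and `β : (x,y,z) ↦ (-x, y + b/2, c/2 - z)`,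
every translation `t_v` with `2v ∈ Λ` and `v ∉ Λ` is such that `⟨Γ, t_v⟩` contains a
nontrivial element with a fixed point. -/
theorem HW3_no_admissible_translation (a b c : ℝ) (ha : 0 < a) (hb : 0 < b) (hc : 0 < c)
    (α β : E 3 ≃ᵢ E 3)
    (hα : ∀ x : E 3, α x = ![x 0 + a / 2, -(x 1), -(x 2)])
    (hβ : ∀ x : E 3, β x = ![-(x 0), x 1 + b / 2, c / 2 - x 2])
    (v : E 3) (τ : E 3 ≃ᵢ E 3) (hτ : ∀ x : E 3, τ x = x + v)
    (h2v : ∃ s ∈ Subgroup.closure {α, β}, ∀ x : E 3, s x = x + (2 : ℝ) • v)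
    (hv : τ ∉ Subgroup.closure {α, β}) :
    ∃ γ ∈ Subgroup.closure ((Subgroup.closure {α, β} : Subgroup (E 3 ≃ᵢ E 3)) ∪ {τ} :
        Set (E 3 ≃ᵢ E 3)),
      γ ≠ 1 ∧ ∃ x : E 3, γ x = x :=
  HW3_no_admissible_translation_general a b c α β hα hβ v τ hτ h2v hv
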